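/- arXiv:1512.03018 — 2 statements merged into one kernel-verified Lean document; each statement's English description precedes it below -/
import Mathlib

section
/- Suppose F∞ = 0 and let h be a profile of maximal height h_max > H₀ and speed c ≠ 0. Then the speed is determined up to sign by the maximal height: c² = g·h_max + (h_max·(h_max + 2H₀)/H₀³)·E∞. -/
/-!
With `F∞ = 0`, multiplying the profile equation by `h' / h²` makes it exact, giving the first
integral `(c/6)(cH₀²/h² − v♯∞)(h')² − Φ(h)` with `Φ' = R/s²`, `R` the `h'`-free part of the
right-hand side. Comparing its value at `+∞` (where `h → H₀`, `h' → 0`) with its value at the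
crest (where `h = h_max`, `h' = 0`) gives `Φ(h_max) = Φ(H₀)`, and
`Φ(m) − Φ(H₀) = (m − H₀)²/(2m²) · (c² − g m − m(m + 2H₀)E∞/H₀³)`.
-/

open Filter Topology

/-- The right-hand side of the profile equation at height `s`, without the `(h')²` term and with
`F∞ = 0`. -/
noncomputable def profileForce (g H₀ c E s : ℝ) : ℝ :=
  (s - H₀) / (2 * s) * (2 * c ^ 2 * H₀ - g * s * (s + H₀)) - (s ^ 3 / H₀ ^ 3 - 1) * E

noncomputable def profilePotential (g H₀ c E s : ℝ) : ℝ :=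
  c ^ 2 * H₀ ^ 2 / (2 * s ^ 2) - c ^ 2 * H₀ / s - g * s / 2 - g * H₀ ^ 2 / (2 * s)
    - E * s ^ 2 / (2 * H₀ ^ 3) - E / s

noncomputable def profileEnergy (g H₀ c vs E s u : ℝ) : ℝ :=
  c / 6 * (c * H₀ ^ 2 / s ^ 2 - vs) * u ^ 2 - profilePotential g H₀ c E s

theorem hasDerivAt_profilePotential {g H₀ c E s : ℝ} (hH : H₀ ≠ 0) (hs : s ≠ 0) :
    HasDerivAt (profilePotential g H₀ c E) (profileForce g H₀ c E s / s ^ 2) s := by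
  have hinv : HasDerivAt (fun t : ℝ => t⁻¹) (-(s ^ 2)⁻¹) s := hasDerivAt_inv hs
  have hinv2 := (hasDerivAt_pow 2 s).fun_inv (pow_ne_zero 2 hs)
  have hsum := (hinv2.const_mul (c ^ 2 * H₀ ^ 2 / 2)).fun_sub (hinv.const_mul (c ^ 2 * H₀))
    |>.fun_sub ((hasDerivAt_id' s).const_mul (g / 2)) |>.fun_sub (hinv.const_mul (g * H₀ ^ 2 / 2))
    |>.fun_sub ((hasDerivAt_pow 2 s).const_mul (E / (2 * H₀ ^ 3))) |>.fun_sub (hinv.const_mul E)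
  have hform : profilePotential g H₀ c E = fun t => c ^ 2 * H₀ ^ 2 / 2 * (t ^ 2)⁻¹
      - c ^ 2 * H₀ * t⁻¹ - g / 2 * t - g * H₀ ^ 2 / 2 * t⁻¹ - E / (2 * H₀ ^ 3) * t ^ 2
      - E * t⁻¹ := by
    funext t
    simp only [profilePotential]
    ring
  rw [hform]
  refine hsum.congr_deriv ?_
  simp only [profileForce]
  field_simp
  ring

theorem profilePotential_sub_profilePotential {g H₀ c E m : ℝ} (hH : H₀ ≠ 0) (hm : m ≠ 0) :
    profilePotential g H₀ c E m - profilePotential g H₀ c E H₀ =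
      (m - H₀) ^ 2 / (2 * m ^ 2) * (c ^ 2 - g * m - m * (m + 2 * H₀) / H₀ ^ 3 * E) := by
  simp only [profilePotential]
  field_simp
  ring

theorem sq_eq_of_profilePotential_eq {g H₀ c E m : ℝ} (hH : H₀ ≠ 0) (hm : m ≠ 0) (hmH : m ≠ H₀)
    (heq : profilePotential g H₀ c E m = profilePotential g H₀ c E H₀) :
    c ^ 2 = g * m + (m * (m + 2 * H₀) / H₀ ^ 3) * E := by
  have hfactor := profilePotential_sub_profilePotential (g := g) (c := c) (E := E) hH hm
  rw [heq, sub_self, eq_comm] at hfactor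
  have hne : (m - H₀) ^ 2 / (2 * m ^ 2) ≠ 0 :=
    div_ne_zero (pow_ne_zero 2 (sub_ne_zero.mpr hmH)) (by positivity)
  linarith [(mul_eq_zero.mp hfactor).resolve_left hne]

theorem hasDerivAt_profileEnergy_eq_zero {g H₀ c vs E x u' : ℝ} {h u : ℝ → ℝ} (hH : H₀ ≠ 0)
    (hx : h x ≠ 0) (hh : HasDerivAt h (u x) x) (hu : HasDerivAt u u' x)
    (hode : 1 / 3 * c * (c * H₀ ^ 2 - vs * h x ^ 2) * u' =
      profileForce g H₀ c E (h x) + c ^ 2 / 3 * H₀ ^ 2 * u x ^ 2 / h x) :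
    HasDerivAt (fun y => profileEnergy g H₀ c vs E (h y) (u y)) 0 x := by
  have hcoef := (((hh.fun_pow 2).fun_inv (pow_ne_zero 2 hx)).const_mul (c * H₀ ^ 2)).sub_const vs
    |>.const_mul (c / 6)
  have hpot := (hasDerivAt_profilePotential (g := g) (c := c) (E := E) hH hx).comp x hh
  have htot := (hcoef.fun_mul (hu.fun_pow 2)).fun_sub hpot
  have hform : (fun y => profileEnergy g H₀ c vs E (h y) (u y)) =
      fun y => c / 6 * (c * H₀ ^ 2 * (h y ^ 2)⁻¹ - vs) * u y ^ 2
        - (profilePotential g H₀ c E ∘ h) y := by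
    funext y
    simp only [profileEnergy, Function.comp, div_eq_mul_inv]
  rw [hform]
  refine htot.congr_deriv ?_
  simp only [Nat.cast_ofNat, show (2:ℕ) - 1 = 1 from rfl, pow_one]
  field_simp at hode ⊢
  linear_combination (2 * u x) * hode

theorem eq_of_forall_hasDerivAt_zero_of_tendsto {f : ℝ → ℝ} {L : ℝ}
    (hf : ∀ x, HasDerivAt f 0 x) (hL : Tendsto f atTop (𝓝 L)) (x : ℝ) : f x = L := by
  have hconst : f = fun _ => f x :=
    funext fun y => is_const_of_deriv_eq_zero (fun z => (hf z).differentiableAt)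
      (fun z => (hf z).deriv) y x
  rw [hconst] at hL
  exact tendsto_nhds_unique tendsto_const_nhds hL

theorem speed_determined_by_maximal_height_general
    (g H₀ c vs Einf Finf hmax : ℝ) (hH : 0 < H₀)
    (hF : Finf = 0) (hmax_gt : H₀ < hmax)
    (h : ℝ → ℝ) (hC2 : ContDiff ℝ 2 h) (hpos : ∀ x, 0 < h x)
    (hode : ∀ x, (1/3) * c * (c * H₀ ^ 2 - vs * (h x) ^ 2) * deriv (deriv h) x =
      ((h x - H₀) / (2 * h x)) * (2 * c ^ 2 * H₀ - g * h x * (h x + H₀))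
        - ((h x) ^ 3 / H₀ ^ 3 - 1) * Einf
        - 2 * (Finf / c) * (((h x) ^ 2 - H₀ ^ 2) * (h x) ^ 3 / H₀ ^ 5)
        + (c ^ 2 / 3) * H₀ ^ 2 * (deriv h x) ^ 2 / h x)
    (htop : Tendsto h atTop (nhds H₀))
    (htop' : Tendsto (deriv h) atTop (nhds 0))
    (hle : ∀ x, h x ≤ hmax) (hatt : ∃ x, h x = hmax) :
    c ^ 2 = g * hmax + (hmax * (hmax + 2 * H₀) / H₀ ^ 3) * Einf := by
  subst hF
  have hh : Differentiable ℝ h := hC2.differentiable two_ne_zero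
  have hh' : Differentiable ℝ (deriv h) := hC2.differentiable_deriv_two
  set energy := fun y => profileEnergy g H₀ c vs Einf (h y) (deriv h y)
  have hconserved (x : ℝ) : HasDerivAt energy 0 x :=
    hasDerivAt_profileEnergy_eq_zero hH.ne' (hpos x).ne' (hh x).hasDerivAt (hh' x).hasDerivAt
      (by simpa [profileForce] using hode x)
  have hlimit : Tendsto energy atTop (𝓝 (profileEnergy g H₀ c vs Einf H₀ 0)) := by
    have hcont :
        ContinuousAt (fun p : ℝ × ℝ => profileEnergy g H₀ c vs Einf p.1 p.2) (H₀, 0) := by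
      simp only [profileEnergy, profilePotential]
      fun_prop (disch := simp [hH.ne'])
    have hlim := hcont.tendsto.comp (htop.prodMk_nhds htop')
    exact hlim
  obtain ⟨x₀, hx₀⟩ := hatt
  have hslope : deriv h x₀ = 0 :=
    IsLocalMax.deriv_eq_zero (Eventually.of_forall fun y => hx₀ ▸ hle y)
  have hlevel : profilePotential g H₀ c Einf hmax = profilePotential g H₀ c Einf H₀ := by
    simpa [energy, profileEnergy, hx₀, hslope] using
      eq_of_forall_hasDerivAt_zero_of_tendsto hconserved hlimit x₀
  exact sq_eq_of_profilePotential_eq hH.ne' (hH.trans hmax_gt).ne' hmax_gt.ne' hlevel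

/-- When `F∞ = 0`, the speed of a solitary wave of maximal height
`hmax` is determined up to sign by the maximal height. -/
theorem speed_determined_by_maximal_height
    (g H₀ c vs Einf Finf hmax : ℝ) (hg : 0 < g) (hH : 0 < H₀) (hc : c ≠ 0)
    (hE : 0 < Einf) (hF : Finf = 0) (hmax_gt : H₀ < hmax)
    (h : ℝ → ℝ) (hC2 : ContDiff ℝ 2 h) (hpos : ∀ x, 0 < h x)
    (hode : ∀ x, (1/3) * c * (c * H₀ ^ 2 - vs * (h x) ^ 2) * deriv (deriv h) x =
      ((h x - H₀) / (2 * h x)) * (2 * c ^ 2 * H₀ - g * h x * (h x + H₀))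
        - ((h x) ^ 3 / H₀ ^ 3 - 1) * Einf
        - 2 * (Finf / c) * (((h x) ^ 2 - H₀ ^ 2) * (h x) ^ 3 / H₀ ^ 5)
        + (c ^ 2 / 3) * H₀ ^ 2 * (deriv h x) ^ 2 / h x)
    (htop : Tendsto h atTop (nhds H₀)) (hbot : Tendsto h atBot (nhds H₀))
    (htop' : Tendsto (deriv h) atTop (nhds 0))
    (hbot' : Tendsto (deriv h) atBot (nhds 0))
    (hle : ∀ x, h x ≤ hmax) (hatt : ∃ x, h x = hmax) :
    c ^ 2 = g * hmax + (hmax * (hmax + 2 * H₀) / H₀ ^ 3) * Einf :=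
  speed_determined_by_maximal_height_general g H₀ c vs Einf Finf hmax hH hF hmax_gt h hC2 hpos hode
    htop htop' hle hatt
end

section
/- Suppose F∞ = 0 and let c·(c·H₀² − v♯∞·h_max²) > 0 with c² = g·h_max + h_max·(h_max + 2H₀)·E∞/H₀³. If h₁ and h₂ are two profiles of the same maximal height h_max > H₀ and the same speed c, then there exists a ∈ ℝ such that h₂(x) = h₁(x − a) for all x ∈ ℝ; i.e. the solitary wave is unique up to translation. -/
/-!
At a crest a profile reaches `hmax` with zero slope, so the phase curves `x ↦ (h x, h' x)` of
the two profiles, suitably translated, pass through the same point `(hmax, 0)` at the same time.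
Solving the profile ODE for `h''` turns it into an autonomous first-order system whose vector
field is `C¹` wherever `h ≠ 0` and the coefficient of `h''` does not vanish; along a profile the
latter holds because `0 < h ≤ hmax`. Cauchy–Lipschitz uniqueness, propagated along `ℝ` by
connectedness, then identifies the two phase curves.
-/

open Filter Set Topology

theorem ODE_solution_unique_of_contDiffOn {E : Type*} [NormedAddCommGroup E] [NormedSpace ℝ E]
    {v : E → E} {U : Set E} (hU : IsOpen U) (hv : ContDiffOn ℝ 1 v U) {γ γ' : ℝ → E}
    (hγ : ∀ t, HasDerivAt γ (v (γ t)) t) (hγ' : ∀ t, HasDerivAt γ' (v (γ' t)) t)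
    (hγU : ∀ t, γ t ∈ U) {t₀ : ℝ} (h : γ t₀ = γ' t₀) : γ = γ' := by
  have hcont : Continuous γ := continuous_iff_continuousAt.2 fun t => (hγ t).continuousAt
  have hcont' : Continuous γ' := continuous_iff_continuousAt.2 fun t => (hγ' t).continuousAt
  have hopen : IsOpen {t | γ t = γ' t} := by
    refine isOpen_iff_mem_nhds.2 fun t₁ (ht₁ : γ t₁ = γ' t₁) => ?_
    obtain ⟨K, s, hs, hlip⟩ := (hv.contDiffAt (hU.mem_nhds (hγU t₁))).exists_lipschitzOnWith
    have hγs : ∀ᶠ t in 𝓝 t₁, γ t ∈ s := hcont.continuousAt.preimage_mem_nhds hs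
    have hγ's : ∀ᶠ t in 𝓝 t₁, γ' t ∈ s := hcont'.continuousAt.preimage_mem_nhds (ht₁ ▸ hs)
    exact ODE_solution_unique_of_eventually (v := fun _ => v) (s := fun _ => s)
      (.of_forall fun _ => hlip) (hγs.mono fun t ht => ⟨hγ t, ht⟩)
      (hγ's.mono fun t ht => ⟨hγ' t, ht⟩) ht₁
  have hall := IsClopen.eq_univ ⟨isClosed_eq hcont hcont', hopen⟩ ⟨t₀, h⟩
  funext t
  exact (hall ▸ mem_univ t : t ∈ {t | γ t = γ' t})

theorem hasDerivAt_prodMk_deriv {h : ℝ → ℝ} (hh : ContDiff ℝ 2 h) (x : ℝ) :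
    HasDerivAt (fun y => (h y, deriv h y)) (deriv h x, deriv (deriv h) x) x :=
  have hh' : ContDiff ℝ (1 + 1) h := hh
  ((hh.differentiable (by norm_num)) x).hasDerivAt.prodMk
    (((contDiff_succ_iff_deriv.mp hh').2.2.differentiable one_ne_zero) x).hasDerivAt

section Profile

variable (g H₀ c vs Einf : ℝ)

noncomputable def profileCoeff (h : ℝ) : ℝ := (1/3) * c * (c * H₀ ^ 2 - vs * h ^ 2)

noncomputable def profileRhs (h p : ℝ) : ℝ :=
  ((h - H₀) / (2 * h)) * (2 * c ^ 2 * H₀ - g * h * (h + H₀))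
    - (h ^ 3 / H₀ ^ 3 - 1) * Einf + (c ^ 2 / 3) * H₀ ^ 2 * p ^ 2 / h

noncomputable def profileField (u : ℝ × ℝ) : ℝ × ℝ :=
  (u.2, profileRhs g H₀ c Einf u.1 u.2 / profileCoeff H₀ c vs u.1)

def profileDomain : Set (ℝ × ℝ) := {u | u.1 ≠ 0 ∧ profileCoeff H₀ c vs u.1 ≠ 0}

theorem isOpen_profileDomain : IsOpen (profileDomain H₀ c vs) := by
  unfold profileDomain profileCoeff
  exact (isOpen_ne_fun continuous_fst continuous_const).inter
    (isOpen_ne_fun (by fun_prop) continuous_const)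

theorem contDiffOn_profileField :
    ContDiffOn ℝ 1 (profileField g H₀ c vs Einf) (profileDomain H₀ c vs) := by
  rintro u ⟨hu, hcoeff⟩
  refine ContDiffAt.contDiffWithinAt ?_
  unfold profileField profileRhs
  unfold profileCoeff at hcoeff ⊢
  fun_prop (disch := first | assumption | simpa using hu)

theorem profileCoeff_pos {hmax h : ℝ} (hcrit : 0 < c * (c * H₀ ^ 2 - vs * hmax ^ 2))
    (h0 : 0 < h) (hle : h ≤ hmax) : 0 < profileCoeff H₀ c vs h := by
  have hsq : h ^ 2 ≤ hmax ^ 2 := pow_le_pow_left₀ h0.le hle 2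
  -- affine in `h ^ 2`, nonnegative at `h = 0` and positive at `h = hmax`
  have hinterp : hmax ^ 2 * (c * (c * H₀ ^ 2 - vs * h ^ 2)) =
      (hmax ^ 2 - h ^ 2) * (c * H₀) ^ 2 + h ^ 2 * (c * (c * H₀ ^ 2 - vs * hmax ^ 2)) := by ring
  have hpos : 0 < hmax ^ 2 * (c * (c * H₀ ^ 2 - vs * h ^ 2)) := by
    rw [hinterp]
    exact add_pos_of_nonneg_of_pos (mul_nonneg (sub_nonneg.2 hsq) (sq_nonneg _))
      (mul_pos (pow_pos h0 2) hcrit)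
  unfold profileCoeff
  nlinarith [pos_of_mul_pos_right hpos (sq_nonneg hmax)]

theorem hasDerivAt_profileField {h : ℝ → ℝ} (hh : ContDiff ℝ 2 h)
    (hcoeff : ∀ x, profileCoeff H₀ c vs (h x) ≠ 0)
    (hode : ∀ x, profileCoeff H₀ c vs (h x) * deriv (deriv h) x =
      profileRhs g H₀ c Einf (h x) (deriv h x)) (x : ℝ) :
    HasDerivAt (fun y => (h y, deriv h y)) (profileField g H₀ c vs Einf (h x, deriv h x)) x := by
  have hfield : profileField g H₀ c vs Einf (h x, deriv h x) = (deriv h x, deriv (deriv h) x) :=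
    Prod.ext rfl ((div_eq_iff (hcoeff x)).2 (by rw [mul_comm]; exact (hode x).symm))
  exact hfield ▸ hasDerivAt_prodMk_deriv hh x

end Profile

theorem solitary_wave_unique_up_to_translation_general
    (g H₀ c vs Einf hmax : ℝ)
    (hcrit : 0 < c * (c * H₀ ^ 2 - vs * hmax ^ 2))
    (h₁ h₂ : ℝ → ℝ)
    (hC2₁ : ContDiff ℝ 2 h₁) (hpos₁ : ∀ x, 0 < h₁ x)
    (hode₁ : ∀ x, (1/3) * c * (c * H₀ ^ 2 - vs * (h₁ x) ^ 2) * deriv (deriv h₁) x =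
      ((h₁ x - H₀) / (2 * h₁ x)) * (2 * c ^ 2 * H₀ - g * h₁ x * (h₁ x + H₀))
        - ((h₁ x) ^ 3 / H₀ ^ 3 - 1) * Einf
        + (c ^ 2 / 3) * H₀ ^ 2 * (deriv h₁ x) ^ 2 / h₁ x)
    (hle₁ : ∀ x, h₁ x ≤ hmax) (hatt₁ : ∃ x, h₁ x = hmax)
    (hC2₂ : ContDiff ℝ 2 h₂) (hpos₂ : ∀ x, 0 < h₂ x)
    (hode₂ : ∀ x, (1/3) * c * (c * H₀ ^ 2 - vs * (h₂ x) ^ 2) * deriv (deriv h₂) x =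
      ((h₂ x - H₀) / (2 * h₂ x)) * (2 * c ^ 2 * H₀ - g * h₂ x * (h₂ x + H₀))
        - ((h₂ x) ^ 3 / H₀ ^ 3 - 1) * Einf
        + (c ^ 2 / 3) * H₀ ^ 2 * (deriv h₂ x) ^ 2 / h₂ x)
    (hle₂ : ∀ x, h₂ x ≤ hmax) (hatt₂ : ∃ x, h₂ x = hmax) :
    ∃ a : ℝ, ∀ x, h₂ x = h₁ (x - a) := by
  have hcoeff {h : ℝ → ℝ} (hpos : ∀ x, 0 < h x) (hle : ∀ x, h x ≤ hmax) (x : ℝ) :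
      profileCoeff H₀ c vs (h x) ≠ 0 :=
    (profileCoeff_pos H₀ c vs hcrit (hpos x) (hle x)).ne'
  obtain ⟨x₁, hx₁⟩ := hatt₁
  obtain ⟨x₂, hx₂⟩ := hatt₂
  have hcrest₁ : deriv h₁ x₁ = 0 := IsLocalMax.deriv_eq_zero (.of_forall fun y => hx₁ ▸ hle₁ y)
  have hcrest₂ : deriv h₂ x₂ = 0 := IsLocalMax.deriv_eq_zero (.of_forall fun y => hx₂ ▸ hle₂ y)
  have traj₁ := hasDerivAt_profileField g H₀ c vs Einf hC2₁ (hcoeff hpos₁ hle₁) hode₁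
  have traj₂ := hasDerivAt_profileField g H₀ c vs Einf hC2₂ (hcoeff hpos₂ hle₂) hode₂
  have hphase := ODE_solution_unique_of_contDiffOn (isOpen_profileDomain H₀ c vs)
    (contDiffOn_profileField g H₀ c vs Einf) traj₂
    (fun t => (traj₁ (t - (x₂ - x₁))).comp_sub_const t (x₂ - x₁))
    (fun t => ⟨(hpos₂ t).ne', hcoeff hpos₂ hle₂ t⟩) (t₀ := x₂)
    (by simp [hx₁, hx₂, hcrest₁, hcrest₂])
  exact ⟨x₂ - x₁, fun x => congrArg Prod.fst (congrFun hphase x)⟩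

/-- Uniqueness up to translation of the solitary wave of given
maximal height `hmax` and speed `c` (case `F∞ = 0`). -/
theorem solitary_wave_unique_up_to_translation
    (g H₀ c vs Einf hmax : ℝ) (hg : 0 < g) (hH : 0 < H₀) (hc : c ≠ 0)
    (hE : 0 < Einf) (hmax_gt : H₀ < hmax)
    (hcrit : 0 < c * (c * H₀ ^ 2 - vs * hmax ^ 2))
    (hspeed : c ^ 2 = g * hmax + hmax * (hmax + 2 * H₀) * Einf / H₀ ^ 3)
    (h₁ h₂ : ℝ → ℝ)
    (hC2₁ : ContDiff ℝ 2 h₁) (hpos₁ : ∀ x, 0 < h₁ x)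
    (hode₁ : ∀ x, (1/3) * c * (c * H₀ ^ 2 - vs * (h₁ x) ^ 2) * deriv (deriv h₁) x =
      ((h₁ x - H₀) / (2 * h₁ x)) * (2 * c ^ 2 * H₀ - g * h₁ x * (h₁ x + H₀))
        - ((h₁ x) ^ 3 / H₀ ^ 3 - 1) * Einf
        + (c ^ 2 / 3) * H₀ ^ 2 * (deriv h₁ x) ^ 2 / h₁ x)
    (htop₁ : Tendsto h₁ atTop (nhds H₀)) (hbot₁ : Tendsto h₁ atBot (nhds H₀))
    (htop₁' : Tendsto (deriv h₁) atTop (nhds 0))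
    (hbot₁' : Tendsto (deriv h₁) atBot (nhds 0))
    (hle₁ : ∀ x, h₁ x ≤ hmax) (hatt₁ : ∃ x, h₁ x = hmax)
    (hC2₂ : ContDiff ℝ 2 h₂) (hpos₂ : ∀ x, 0 < h₂ x)
    (hode₂ : ∀ x, (1/3) * c * (c * H₀ ^ 2 - vs * (h₂ x) ^ 2) * deriv (deriv h₂) x =
      ((h₂ x - H₀) / (2 * h₂ x)) * (2 * c ^ 2 * H₀ - g * h₂ x * (h₂ x + H₀))
        - ((h₂ x) ^ 3 / H₀ ^ 3 - 1) * Einf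
        + (c ^ 2 / 3) * H₀ ^ 2 * (deriv h₂ x) ^ 2 / h₂ x)
    (htop₂ : Tendsto h₂ atTop (nhds H₀)) (hbot₂ : Tendsto h₂ atBot (nhds H₀))
    (htop₂' : Tendsto (deriv h₂) atTop (nhds 0))
    (hbot₂' : Tendsto (deriv h₂) atBot (nhds 0))
    (hle₂ : ∀ x, h₂ x ≤ hmax) (hatt₂ : ∃ x, h₂ x = hmax) :
    ∃ a : ℝ, ∀ x, h₂ x = h₁ (x - a) :=
  solitary_wave_unique_up_to_translation_general g H₀ c vs Einf hmax hcrit h₁ h₂ hC2₁ hpos₁ hode₁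
    hle₁ hatt₁ hC2₂ hpos₂ hode₂ hle₂ hatt₂
end
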